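/- Let f : ℝ_+^k → int(ℝ_+^k) be a continuous concave mapping (i.e., a continuous positive concave mapping), and let U ⊂ int(ℝ_+^k) be a compact set containing a nonempty open set. Then f is a local c-Lipschitz contraction with respect to Thompson's metric on U: there exists c ∈ [0,1) such that d_T(f(x), f(y)) ≤ c · d_T(x,y) for all x,y ∈ U. -/
import Mathlib


open Filter Topology Set

noncomputable def Mratio {k : ℕ} (x y : Fin k → ℝ) : ℝ :=
  sInf {β : ℝ | 0 < β ∧ ∀ i, x i ≤ β * y i}

noncomputable def dT {k : ℕ} (x y : Fin k → ℝ) : ℝ :=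
  Real.log (max (Mratio x y) (Mratio y x))

def posOrth (k : ℕ) : Set (Fin k → ℝ) := {x | ∀ i, 0 < x i}

def nonnegOrth (k : ℕ) : Set (Fin k → ℝ) := {x | ∀ i, 0 ≤ x i}

lemma Mratio_le {k : ℕ} {x y : Fin k → ℝ} {β : ℝ} (hβ : 0 < β) (h : ∀ i, x i ≤ β * y i) :
    Mratio x y ≤ β :=
  csInf_le ⟨0, fun _ hb => hb.1.le⟩ ⟨hβ, h⟩

lemma Mratio_set_nonempty {k : ℕ} [Nonempty (Fin k)] {x y : Fin k → ℝ}
    (hy : y ∈ posOrth k) :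
    {β : ℝ | 0 < β ∧ ∀ i, x i ≤ β * y i}.Nonempty := by
  set B : ℝ := max 1 (1 + Finset.univ.sup' Finset.univ_nonempty (fun j => x j / y j)) with hB
  refine ⟨B, lt_of_lt_of_le one_pos (le_max_left _ _), fun i => ?_⟩
  have h1 : x i / y i ≤ Finset.univ.sup' Finset.univ_nonempty (fun j => x j / y j) :=
    Finset.le_sup' (f := fun j => x j / y j) (Finset.mem_univ i)
  have h2 : x i / y i ≤ B := le_trans (by linarith) (le_max_right _ _)
  have hyi := hy i
  calc x i = (x i / y i) * y i := by field_simp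
    _ ≤ B * y i := by nlinarith

lemma Mratio_spec {k : ℕ} [Nonempty (Fin k)] {x y : Fin k → ℝ}
    (hx : x ∈ posOrth k) (hy : y ∈ posOrth k) :
    ∀ i, x i ≤ Mratio x y * y i := by
  intro i
  have hyi := hy i
  have hlb : x i / y i ≤ Mratio x y := by
    refine le_csInf (Mratio_set_nonempty hy) (fun b hb => ?_)
    rw [div_le_iff₀ hyi]
    exact hb.2 i
  calc x i = (x i / y i) * y i := by field_simp
    _ ≤ Mratio x y * y i := by nlinarith

lemma Mratio_pos {k : ℕ} [Nonempty (Fin k)] {x y : Fin k → ℝ}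
    (hx : x ∈ posOrth k) (hy : y ∈ posOrth k) : 0 < Mratio x y := by
  obtain ⟨i⟩ := ‹Nonempty (Fin k)›
  have h := Mratio_spec hx hy i
  nlinarith [hx i, hy i]

lemma one_le_maxM {k : ℕ} [Nonempty (Fin k)] {x y : Fin k → ℝ}
    (hx : x ∈ posOrth k) (hy : y ∈ posOrth k) :
    1 ≤ max (Mratio x y) (Mratio y x) := by
  obtain ⟨i⟩ := ‹Nonempty (Fin k)›
  have h1 := Mratio_spec hx hy i
  have h2 := Mratio_spec hy hx i
  have hp1 := Mratio_pos hx hy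
  have hp2 := Mratio_pos hy hx
  by_contra h
  push_neg at h
  have hm1 : Mratio x y < 1 := lt_of_le_of_lt (le_max_left _ _) h
  have hm2 : Mratio y x < 1 := lt_of_le_of_lt (le_max_right _ _) h
  nlinarith [hx i, hy i]

lemma dT_nonneg {k : ℕ} [Nonempty (Fin k)] {x y : Fin k → ℝ}
    (hx : x ∈ posOrth k) (hy : y ∈ posOrth k) : 0 ≤ dT x y := by
  have := one_le_maxM hx hy
  have : (0 : ℝ) ≤ Real.log (max (Mratio x y) (Mratio y x)) := by
    rw [← Real.log_one]; exact Real.log_le_log one_pos this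
  exact this

lemma exp_dT {k : ℕ} [Nonempty (Fin k)] {x y : Fin k → ℝ}
    (hx : x ∈ posOrth k) (hy : y ∈ posOrth k) :
    Real.exp (dT x y) = max (Mratio x y) (Mratio y x) :=
  Real.exp_log (lt_of_lt_of_le one_pos (one_le_maxM hx hy))

lemma le_exp_dT {k : ℕ} [Nonempty (Fin k)] {x y : Fin k → ℝ}
    (hx : x ∈ posOrth k) (hy : y ∈ posOrth k) :
    ∀ i, x i ≤ Real.exp (dT x y) * y i := by
  intro i
  have h := Mratio_spec hx hy i
  have hle : Mratio x y ≤ Real.exp (dT x y) := by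
    rw [exp_dT hx hy]; exact le_max_left _ _
  nlinarith [hy i]

lemma dT_symm {k : ℕ} (x y : Fin k → ℝ) : dT x y = dT y x := by
  unfold dT; rw [max_comm]

/-- monotonicity of a nonnegative concave map on the cone -/
lemma mono_step {k : ℕ} (f : (Fin k → ℝ) → (Fin k → ℝ))
    (hpos : ∀ x ∈ nonnegOrth k, f x ∈ posOrth k)
    (hconc : ∀ x ∈ nonnegOrth k, ∀ y ∈ nonnegOrth k, ∀ t : ℝ, 0 < t → t < 1 →
      t • f x + (1 - t) • f y ≤ f (t • x + (1 - t) • y))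
    {u v : Fin k → ℝ} (hu : u ∈ nonnegOrth k) (hv : v ∈ nonnegOrth k)
    (huv : ∀ i, u i ≤ v i) : ∀ i, f u i ≤ f v i := by
  intro i
  refine le_of_forall_pos_le_add (fun ε hε => ?_)
  set s : ℝ := max 2 (f u i / ε) with hs
  have hs2 : (2 : ℝ) ≤ s := le_max_left _ _
  have hs0 : (0 : ℝ) < s := by linarith
  set p : Fin k → ℝ := u + s • (v - u) with hp
  have hpmem : p ∈ nonnegOrth k := by
    intro j
    have := huv j
    have := hu j
    simp only [hp, Pi.add_apply, Pi.smul_apply, Pi.sub_apply, smul_eq_mul]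
    nlinarith
  have hτ0 : (0 : ℝ) < 1 / s := by positivity
  have hτ1 : 1 / s < 1 := by
    rw [div_lt_one hs0]; linarith
  have hcomb : (1/s) • p + (1 - 1/s) • u = v := by
    funext j
    simp only [hp, Pi.add_apply, Pi.smul_apply, Pi.sub_apply, smul_eq_mul]
    field_simp
    ring
  have h := hconc p hpmem u hu (1/s) hτ0 hτ1
  rw [hcomb] at h
  have hi := h i
  simp only [Pi.add_apply, Pi.smul_apply, smul_eq_mul] at hi
  have hfp : 0 ≤ f p i := (hpos p hpmem i).le
  have hfu : 0 ≤ f u i := (hpos u hu i).le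
  have hdiv : f u i / s ≤ ε := by
    rw [div_le_iff₀ hs0]
    have : f u i / ε ≤ s := le_max_right _ _
    rw [div_le_iff₀ hε] at this
    linarith
  have : f u i - f u i / s ≤ f v i := by
    have : (1 - 1/s) * f u i ≤ f v i := by nlinarith
    have heq : (1 - 1/s) * f u i = f u i - f u i / s := by ring
    linarith [heq ▸ this]
  linarith

/-- Proposition 3: a continuous positive concave mapping is a local
c-Lipschitz contraction w.r.t. Thompson's metric on any compact set U ⊂ int(ℝ₊ᵏ)
containing a nonempty open set. -/
theorem stmt6 {k : ℕ} (f : (Fin k → ℝ) → (Fin k → ℝ))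
    (hpos : ∀ x ∈ nonnegOrth k, f x ∈ posOrth k)
    (hcont : ContinuousOn f (nonnegOrth k))
    (hconc : ∀ x ∈ nonnegOrth k, ∀ y ∈ nonnegOrth k, ∀ t : ℝ, 0 < t → t < 1 →
      t • f x + (1 - t) • f y ≤ f (t • x + (1 - t) • y))
    (U : Set (Fin k → ℝ)) (hU : U ⊆ posOrth k) (hUc : IsCompact U)
    (hopen : ∃ V : Set (Fin k → ℝ), IsOpen V ∧ V.Nonempty ∧ V ⊆ U) :
    ∃ c : ℝ, 0 ≤ c ∧ c < 1 ∧ ∀ x ∈ U, ∀ y ∈ U, dT (f x) (f y) ≤ c * dT x y := by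
  rcases Nat.eq_zero_or_pos k with hk | hk
  · subst hk
    refine ⟨0, le_refl _, by norm_num, fun x _ y _ => ?_⟩
    have h0 : ∀ a b : Fin 0 → ℝ, dT a b = 0 := by
      intro a b
      have hM : ∀ a b : Fin 0 → ℝ, Mratio a b = 0 := by
        intro a b
        unfold Mratio
        have : {β : ℝ | 0 < β ∧ ∀ i : Fin 0, a i ≤ β * b i} = Set.Ioi 0 := by
          ext β
          simp only [Set.mem_setOf_eq, Set.mem_Ioi]
          exact ⟨fun h => h.1, fun h => ⟨h, fun i => i.elim0⟩⟩
        rw [this, csInf_Ioi]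
      unfold dT
      rw [hM, hM]
      simp
    rw [h0, h0]; norm_num
  · haveI : Nonempty (Fin k) := ⟨⟨0, hk⟩⟩
    obtain ⟨V, _, ⟨v, hv⟩, hVU⟩ := hopen
    have hvU : v ∈ U := hVU hv
    have hUn : U ⊆ nonnegOrth k := fun x hx i => (hU hx i).le
    -- upper bound on f over U
    obtain ⟨x₀, hx₀U, hx₀⟩ := hUc.exists_isMaxOn ⟨v, hvU⟩
      ((hcont.mono hUn).norm)
    set M : ℝ := ‖f x₀‖ with hM
    have hMb : ∀ x ∈ U, ∀ i, f x i ≤ M := by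
      intro x hx i
      have h1 : f x i ≤ ‖f x‖ := (le_abs_self _).trans (norm_le_pi_norm (f x) i)
      exact h1.trans (hx₀ hx)
    have hMpos : 0 < M := by
      obtain ⟨i⟩ := ‹Nonempty (Fin k)›
      have := hpos x₀ (hUn hx₀U) i
      have h1 : f x₀ i ≤ ‖f x₀‖ := (le_abs_self _).trans (norm_le_pi_norm (f x₀) i)
      linarith
    -- lower bound from f 0
    have h0mem : (0 : Fin k → ℝ) ∈ nonnegOrth k := fun i => le_refl 0
    have hb := hpos 0 h0mem
    set bmin : ℝ := Finset.univ.inf' Finset.univ_nonempty (fun i => f 0 i) with hbmin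
    have hbminpos : 0 < bmin := by
      rw [hbmin, Finset.lt_inf'_iff]
      exact fun i _ => hb i
    have hbmin_le : ∀ i, bmin ≤ f 0 i := fun i =>
      Finset.inf'_le _ (Finset.mem_univ i)
    set β : ℝ := min (bmin / M) 1 with hβ
    have hβpos : 0 < β := lt_min (by positivity) one_pos
    have hβ1 : β ≤ 1 := min_le_right _ _
    have hβM : β * M ≤ bmin := by
      have : β ≤ bmin / M := min_le_left _ _
      rw [le_div_iff₀ hMpos] at this
      linarith
    refine ⟨1 - β, by linarith, by linarith, ?_⟩
    -- key pointwise estimate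
    have key : ∀ a ∈ U, ∀ b ∈ U, ∀ i,
        f a i ≤ Real.exp ((1 - β) * dT a b) * f b i := by
      intro a ha b hb i
      have haP := hU ha
      have hbP := hU hb
      have haN := hUn ha
      have hbN := hUn hb
      have hfaP := hpos a haN
      have hfbP := hpos b hbN
      set d : ℝ := dT a b with hd
      have hd0 : 0 ≤ d := dT_nonneg haP hbP
      rcases eq_or_lt_of_le hd0 with hdeq | hdpos
      · -- d = 0 ⇒ a = b
        have hmax : max (Mratio a b) (Mratio b a) = 1 := by
          have := exp_dT haP hbP
          rw [← hd, ← hdeq] at this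
          simpa using this.symm
        have hab : a = b := by
          funext j
          have h1 := Mratio_spec haP hbP j
          have h2 := Mratio_spec hbP haP j
          have hm1 : Mratio a b ≤ 1 := le_of_le_of_eq (le_max_left _ _) hmax
          have hm2 : Mratio b a ≤ 1 := le_of_le_of_eq (le_max_right _ _) hmax
          have := haP j; have := hbP j
          nlinarith
        rw [hab, ← hdeq]
        simp
      · set t : ℝ := Real.exp (-d) with ht
        have ht0 : 0 < t := Real.exp_pos _
        have ht1 : t < 1 := by
          rw [ht, Real.exp_lt_one_iff]; linarith
        -- t • a ≤ b
        have htab : ∀ j, t * a j ≤ b j := by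
          intro j
          have h1 := le_exp_dT haP hbP j
          have : t * a j ≤ t * (Real.exp d * b j) :=
            mul_le_mul_of_nonneg_left h1 ht0.le
          calc t * a j ≤ t * (Real.exp d * b j) := this
            _ = (Real.exp (-d) * Real.exp d) * b j := by rw [ht]; ring
            _ = b j := by rw [← Real.exp_add]; simp
        have htaN : t • a ∈ nonnegOrth k := by
          intro j
          have := haN j
          simp only [Pi.smul_apply, smul_eq_mul]
          positivity
        -- f (t•a) ≥ t f a + (1-t) f 0
        have hc := hconc a haN 0 h0mem t ht0 ht1
        have hsimp : t • a + (1 - t) • (0 : Fin k → ℝ) = t • a := by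
          simp
        rw [hsimp] at hc
        have hci := hc i
        simp only [Pi.add_apply, Pi.smul_apply, Pi.zero_apply, smul_eq_mul] at hci
        -- monotonicity: f (t•a) ≤ f b
        have hmono := mono_step f hpos hconc htaN hbN
          (fun j => by simpa using htab j) i
        -- combine
        have hfaM : f a i ≤ M := hMb a ha i
        have hfai : 0 < f a i := hfaP i
        have hfbi : 0 < f b i := hfbP i
        have hstep : (t + (1 - t) * β) * f a i ≤ f b i := by
          have h1 : t * f a i + (1 - t) * f 0 i ≤ f b i := le_trans hci hmono
          have h2 : (1 - t) * (β * f a i) ≤ (1 - t) * f 0 i := by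
            have : β * f a i ≤ bmin := by nlinarith
            have := hbmin_le i
            nlinarith
          nlinarith
        -- AM-GM: exp (-(1-β) d) ≤ t + (1-t) β
        have hamgm : Real.exp (-((1 - β) * d)) ≤ t + (1 - t) * β := by
          have hg := Real.geom_mean_le_arith_mean2_weighted
            hβpos.le (by linarith : (0:ℝ) ≤ 1 - β) zero_le_one ht0.le (by ring)
          have hrw : (1 : ℝ) ^ β * t ^ (1 - β) = Real.exp (-((1 - β) * d)) := by
            rw [Real.one_rpow, one_mul, ht,
              Real.rpow_def_of_pos (Real.exp_pos _), Real.log_exp]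
            congr 1
            ring
          rw [hrw] at hg
          linarith [hg]
        set E : ℝ := Real.exp ((1 - β) * d) with hE
        have hEpos : 0 < E := Real.exp_pos _
        have hEE : E * Real.exp (-((1 - β) * d)) = 1 := by
          rw [hE, ← Real.exp_add]
          ring_nf
          exact Real.exp_zero
        have h3 : Real.exp (-((1 - β) * d)) * f a i ≤ (t + (1 - t) * β) * f a i :=
          mul_le_mul_of_nonneg_right hamgm hfai.le
        have h4 : Real.exp (-((1 - β) * d)) * f a i ≤ f b i := h3.trans hstep
        have h5 : E * (Real.exp (-((1 - β) * d)) * f a i) ≤ E * f b i :=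
          mul_le_mul_of_nonneg_left h4 hEpos.le
        calc f a i = E * Real.exp (-((1 - β) * d)) * f a i := by rw [hEE, one_mul]
          _ = E * (Real.exp (-((1 - β) * d)) * f a i) := by ring
          _ ≤ E * f b i := h5
    -- conclude
    intro x hx y hy
    have hfx := hpos x (hUn hx)
    have hfy := hpos y (hUn hy)
    have k1 := key x hx y hy
    have k2 := key y hy x hx
    rw [dT_symm y x] at k2
    have hexp : (0:ℝ) < Real.exp ((1 - β) * dT x y) := Real.exp_pos _
    have hM1 : Mratio (f x) (f y) ≤ Real.exp ((1 - β) * dT x y) := Mratio_le hexp k1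
    have hM2 : Mratio (f y) (f x) ≤ Real.exp ((1 - β) * dT x y) := Mratio_le hexp k2
    have hmaxpos : 0 < max (Mratio (f x) (f y)) (Mratio (f y) (f x)) :=
      lt_max_of_lt_left (Mratio_pos hfx hfy)
    have : dT (f x) (f y) ≤ Real.log (Real.exp ((1 - β) * dT x y)) := by
      unfold dT
      exact Real.log_le_log hmaxpos (max_le hM1 hM2)
    rwa [Real.log_exp] at this
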